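/- arXiv:2206.00829 — 2 statements merged into one kernel-verified Lean document; each statement's English description precedes it below -/
import Mathlib

section
/- If a sequence of continuous compactly supported functions f_n : G → ℂ on a locally compact group G converges to f in the inductive limit topology (uniformly, with supports all contained in a fixed compact set), and closed subgroups H_n converge to H in the Chabauty–Fell topology, with Haar measures chosen continuously (normalized so that a fixed nonnegative f₀ ∈ C_c(G) with f₀(e) ≠ 0 integrates to 1 on each closed subgroup), then ∫_{H_n} f_n dμ_{H_n} → ∫_H f dμ_H. -/
open MeasureTheory Filter Topology

/-! A Urysohn function `g ∈ C_c(G)` with `0 ≤ g` and `g = 1` on `K` dominates every `fₙ - f`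
up to the factor `sup ‖fₙ - f‖ → 0`, and the integrals `∫ g dμₙ` stay bounded because they
converge. Hence `∫ (fₙ - f) dμₙ → 0`, while `∫ f dμₙ → ∫ f dν` by continuity of the Haar
measures along `Hₙ → H`. -/

theorem norm_integral_le_mul_integral_of_norm_le {X E : Type*} [MeasurableSpace X]
    [NormedAddCommGroup E] [NormedSpace ℝ E] {μ : Measure X} {u : X → E} {g : X → ℝ} {ε : ℝ}
    (hg : Integrable g μ) (hle : ∀ x, ‖u x‖ ≤ ε * g x) :
    ‖∫ x, u x ∂μ‖ ≤ ε * ∫ x, g x ∂μ := by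
  rw [← integral_const_mul]
  exact norm_integral_le_of_norm_le (hg.const_mul ε) (Eventually.of_forall hle)

theorem tendsto_integral_sub_of_tendstoUniformly {X E ι : Type*} [MeasurableSpace X]
    [NormedAddCommGroup E] [NormedSpace ℝ E] {l : Filter ι} {μ : ι → Measure X}
    {f : ι → X → E} {flim : X → E} {K : Set X} {g : X → ℝ}
    (hg : ∀ i, Integrable g (μ i)) (hg0 : ∀ x, 0 ≤ g x) (hgK : ∀ x ∈ K, 1 ≤ g x)
    (hbdd : IsBoundedUnder (· ≤ ·) l fun i => ∫ x, g x ∂μ i)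
    (hsupp : ∀ i, Function.support (f i) ⊆ K) (hsupplim : Function.support flim ⊆ K)
    (hunif : TendstoUniformly f flim l) :
    Tendsto (fun i => ∫ x, (f i x - flim x) ∂μ i) l (𝓝 0) := by
  obtain ⟨C, hC⟩ := hbdd
  rw [eventually_map] at hC
  set C' := max C 1
  have hC' : 0 < C' := lt_max_of_lt_right one_pos
  rw [Metric.nhds_basis_closedBall.tendsto_right_iff]
  intro ε hε
  have hδ : 0 < ε / C' := div_pos hε hC'
  filter_upwards [hC, Metric.tendstoUniformly_iff.mp hunif (ε / C') hδ]
    with i hCi hclose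
  have hle : ∀ x, ‖f i x - flim x‖ ≤ ε / C' * g x := by
    intro x
    by_cases hx : x ∈ K
    · rw [← dist_eq_norm, dist_comm]
      exact (hclose x).le.trans (le_mul_of_one_le_right hδ.le (hgK x hx))
    · rw [Function.notMem_support.mp fun h => hx (hsupp i h),
        Function.notMem_support.mp fun h => hx (hsupplim h), sub_zero, norm_zero]
      exact mul_nonneg hδ.le (hg0 x)
  rw [mem_closedBall_zero_iff]
  calc ‖∫ x, (f i x - flim x) ∂μ i‖ ≤ ε / C' * ∫ x, g x ∂μ i :=
        norm_integral_le_mul_integral_of_norm_le (hg i) hle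
    _ ≤ ε / C' * C' := by gcongr; exact hCi.trans (le_max_left C 1)
    _ = ε := div_mul_cancel₀ ε hC'.ne'

theorem tendsto_integral_of_inductiveLimit_of_chabauty_general
    {G : Type*} [TopologicalSpace G]
    [T2Space G] [LocallyCompactSpace G]
    [MeasurableSpace G] [BorelSpace G]
    (μ : ℕ → Measure G) (ν : Measure G)
    [∀ n, IsFiniteMeasureOnCompacts (μ n)]
    (hsmooth : ∀ g : G → ℂ, Continuous g → HasCompactSupport g →
      Tendsto (fun n => ∫ x, g x ∂(μ n)) atTop (𝓝 (∫ x, g x ∂ν)))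
    (f : ℕ → G → ℂ) (flim : G → ℂ)
    (hfc : ∀ n, Continuous (f n)) (hflimc : Continuous flim)
    (K : Set G) (hK : IsCompact K)
    (hsupp : ∀ n, tsupport (f n) ⊆ K) (hsupplim : tsupport flim ⊆ K)
    (hunif : TendstoUniformly f flim atTop) :
    Tendsto (fun n => ∫ x, f n x ∂(μ n)) atTop (𝓝 (∫ x, flim x ∂ν)) := by
  obtain ⟨g, hgK, -, hgsupp, hg01⟩ :=
    exists_continuous_one_zero_of_isCompact hK isClosed_empty (Set.disjoint_empty K)
  have hgbdd : IsBoundedUnder (· ≤ ·) atTop fun n => ∫ x, g x ∂μ n := by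
    have hgC := hsmooth (fun x => (g x : ℂ)) (by fun_prop) (hgsupp.comp_left Complex.ofReal_zero)
    simp only [integral_complex_ofReal] at hgC
    exact hgC.norm.isBoundedUnder_le.mono_le
      (Eventually.of_forall fun n => (Real.le_norm_self _).trans_eq (Complex.norm_real _).symm)
  have hdiff := tendsto_integral_sub_of_tendstoUniformly
    (fun n => g.continuous.integrable_of_hasCompactSupport hgsupp) (fun x => (hg01 x).1)
    (fun x hx => (hgK hx).ge) hgbdd (fun n => (subset_tsupport _).trans (hsupp n))
    ((subset_tsupport _).trans hsupplim) hunif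
  have hflimsupp : HasCompactSupport flim := hK.of_isClosed_subset (isClosed_tsupport _) hsupplim
  have hsum := hdiff.add (hsmooth flim hflimc hflimsupp)
  rw [zero_add] at hsum
  refine hsum.congr fun n => ?_
  rw [integral_sub ((hfc n).integrable_of_hasCompactSupport
      (hK.of_isClosed_subset (isClosed_tsupport _) (hsupp n)))
    (hflimc.integrable_of_hasCompactSupport hflimsupp), sub_add_cancel]

/-- Lemma 1. Let `G` be a locally compact (second countable, Hausdorff) group. Let
`Hₙ → H` be closed subgroups converging in the Chabauty–Fell topology, with left Haar
measures `μ n` on `Hₙ` and `ν` on `H` (realized as measures on `G` carried by the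
subgroups, left-invariant under them), chosen "smoothly": normalized so that a fixed
nonnegative `f₀ ∈ C_c(G)` with `f₀(e) > 0` integrates to `1`, which makes
`H ↦ ∫_H g` continuous for every `g ∈ C_c(G)` — along the convergent sequence this
continuity reads `∫ g dμₙ → ∫ g dν` for all continuous compactly supported `g`.
If `fₙ ∈ C_c(G)` converge to `f` in the inductive limit topology (uniformly, with all
supports in a fixed compact set `K`), then `∫_{Hₙ} fₙ dμₙ → ∫_H f dν`. -/
theorem tendsto_integral_of_inductiveLimit_of_chabauty
    {G : Type*} [TopologicalSpace G] [Group G] [IsTopologicalGroup G]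
    [T2Space G] [LocallyCompactSpace G] [SecondCountableTopology G]
    [MeasurableSpace G] [BorelSpace G]
    (H : ℕ → Subgroup G) (Hlim : Subgroup G)
    (hHcl : ∀ n, IsClosed (H n : Set G)) (hHlimcl : IsClosed (Hlim : Set G))
    (μ : ℕ → Measure G) (ν : Measure G)
    [∀ n, IsFiniteMeasureOnCompacts (μ n)] [IsFiniteMeasureOnCompacts ν]
    (hμcarrier : ∀ n, μ n ((H n : Set G)ᶜ) = 0) (hνcarrier : ν ((Hlim : Set G)ᶜ) = 0)
    (hμinv : ∀ n, ∀ h ∈ H n, ∀ E : Set G, MeasurableSet E →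
      μ n ((fun g => h * g) ⁻¹' E) = μ n E)
    (hνinv : ∀ h ∈ Hlim, ∀ E : Set G, MeasurableSet E →
      ν ((fun g => h * g) ⁻¹' E) = ν E)
    (f₀ : G → ℝ) (hf₀c : Continuous f₀) (hf₀supp : HasCompactSupport f₀)
    (hf₀nonneg : ∀ g, 0 ≤ f₀ g) (hf₀e : 0 < f₀ 1)
    (hnorm : ∀ n, ∫ x, f₀ x ∂(μ n) = 1) (hnormlim : ∫ x, f₀ x ∂ν = 1)
    (hsmooth : ∀ g : G → ℂ, Continuous g → HasCompactSupport g →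
      Tendsto (fun n => ∫ x, g x ∂(μ n)) atTop (𝓝 (∫ x, g x ∂ν)))
    (f : ℕ → G → ℂ) (flim : G → ℂ)
    (hfc : ∀ n, Continuous (f n)) (hflimc : Continuous flim)
    (K : Set G) (hK : IsCompact K)
    (hsupp : ∀ n, tsupport (f n) ⊆ K) (hsupplim : tsupport flim ⊆ K)
    (hunif : TendstoUniformly f flim atTop) :
    Tendsto (fun n => ∫ x, f n x ∂(μ n)) atTop (𝓝 (∫ x, flim x ∂ν)) :=
  tendsto_integral_of_inductiveLimit_of_chabauty_general μ ν hsmooth f flim hfc hflimc K hK hsupp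
    hsupplim hunif
end

section
/- Let X be a locally compact Hausdorff space and let 𝒦(X) be the set of closed subsets of X, topologized by basic open sets U(C, ℱ) = {F closed : F ∩ C = ∅ and F ∩ O ≠ ∅ for all O ∈ ℱ}, where C ranges over compact subsets of X and ℱ over finite families of open subsets of X. Then 𝒦(X) with this topology is a compact Hausdorff space. -/
/-- The Chabauty–Fell (compact-open) topology on the set `𝒦(X)` of closed subsets of a
locally compact Hausdorff space `X`: basic open sets are
`U(C, ℱ) = {F closed : F ∩ C = ∅ and F ∩ O ≠ ∅ for all O ∈ ℱ}` with `C` compact and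
`ℱ` a finite family of open sets. (These sets are closed under finite intersection,
so generating a topology from them yields the topology they form a basis of.) -/
def fellTopology (X : Type*) [TopologicalSpace X] :
    TopologicalSpace {F : Set X // IsClosed F} :=
  TopologicalSpace.generateFrom
    {U | ∃ (C : Set X) (ℱ : Finset (Set X)), IsCompact C ∧ (∀ O ∈ ℱ, IsOpen O) ∧
      U = {F | F.1 ∩ C = ∅ ∧ ∀ O ∈ ℱ, (F.1 ∩ O).Nonempty}}

open Filter Set Topology TopologicalSpace

/-- Separation helper: if `x ∈ F \ G`, produce disjoint Fell-open sets around `F` and `G`. -/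
lemma fell_sep {X : Type*} [TopologicalSpace X] [LocallyCompactSpace X] [T2Space X]
    (F G : {F : Set X // IsClosed F}) (x : X) (hxF : x ∈ F.1) (hxG : x ∉ G.1) :
    ∃ u v, @IsOpen _ (fellTopology X) u ∧ @IsOpen _ (fellTopology X) v ∧
      F ∈ u ∧ G ∈ v ∧ Disjoint u v := by
  obtain ⟨K, hK, hxint, hKsub⟩ := exists_compact_subset G.2.isOpen_compl hxG
  refine ⟨{H | (H.1 ∩ interior K).Nonempty}, {H | H.1 ∩ K = ∅}, ?_, ?_,
    ⟨x, hxF, hxint⟩, ?_, ?_⟩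
  · refine TopologicalSpace.GenerateOpen.basic _
      ⟨∅, {interior K}, isCompact_empty, ?_, ?_⟩
    · intro O hO
      simp only [Finset.mem_singleton] at hO
      subst hO; exact isOpen_interior
    · ext H; simp
  · refine TopologicalSpace.GenerateOpen.basic _
      ⟨K, ∅, hK, by simp, ?_⟩
    · ext H; simp
  · show G.1 ∩ K = ∅
    rw [Set.eq_empty_iff_forall_notMem]
    rintro a ⟨haG, haK⟩
    exact hKsub haK haG
  · rw [Set.disjoint_left]
    rintro H ⟨a, haH, haK⟩ hH2
    have : a ∈ H.1 ∩ K := ⟨haH, interior_subset haK⟩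
    rw [hH2] at this
    exact this

/-- `𝒦(X)` with the Fell compact-open topology is a compact Hausdorff space when `X`
is locally compact Hausdorff. -/
theorem fellTopology_compact_t2 (X : Type*) [TopologicalSpace X]
    [LocallyCompactSpace X] [T2Space X] :
    @CompactSpace {F : Set X // IsClosed F} (fellTopology X) ∧
      @T2Space {F : Set X // IsClosed F} (fellTopology X) := by
  letI := fellTopology X
  constructor
  · refine ⟨?_⟩
    rw [isCompact_iff_ultrafilter_le_nhds]
    intro 𝒰 _
    set A : Set X → Set {F : Set X // IsClosed F} := fun V => {F | (F.1 ∩ V).Nonempty}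
      with hA
    set F₀ : Set X := {x | ∀ V, IsOpen V → x ∈ V → A V ∈ 𝒰} with hF₀
    have hclosed : IsClosed F₀ := by
      rw [← isOpen_compl_iff, isOpen_iff_forall_mem_open]
      intro x hx
      simp only [mem_compl_iff, hF₀, mem_setOf_eq, not_forall] at hx
      obtain ⟨V, hV, hxV, hVU⟩ := hx
      exact ⟨V, fun y hy hyF => hVU (hyF V hV hy), hV, hxV⟩
    refine ⟨⟨F₀, hclosed⟩, trivial, ?_⟩
    have hnhds : 𝓝 (⟨F₀, hclosed⟩ : {F : Set X // IsClosed F}) =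
        ⨅ s ∈ {s | (⟨F₀, hclosed⟩ : {F : Set X // IsClosed F}) ∈ s ∧
          s ∈ {U | ∃ (C : Set X) (ℱ : Finset (Set X)), IsCompact C ∧ (∀ O ∈ ℱ, IsOpen O) ∧
            U = {F | F.1 ∩ C = ∅ ∧ ∀ O ∈ ℱ, (F.1 ∩ O).Nonempty}}}, 𝓟 s :=
      nhds_generateFrom
    rw [hnhds]
    refine le_iInf₂ fun s hs => ?_
    obtain ⟨hmem, C, ℱ, hC, hℱ, rfl⟩ := hs
    rw [le_principal_iff]
    -- claim 1 : the set of closed sets missing C is in 𝒰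
    have claim1 : {F : {F : Set X // IsClosed F} | F.1 ∩ C = ∅} ∈ 𝒰 := by
      have hCx : ∀ x : C, ∃ V, IsOpen V ∧ (x : X) ∈ V ∧ A V ∉ 𝒰 := by
        rintro ⟨x, hx⟩
        by_contra h
        push_neg at h
        have : x ∈ F₀ := fun V hV hxV => h V hV hxV
        have : x ∈ F₀ ∩ C := ⟨this, hx⟩
        rw [hmem.1] at this
        exact this
      choose V hV1 hV2 hV3 using hCx
      obtain ⟨t, ht⟩ := hC.elim_finite_subcover V hV1
        (fun x hx => mem_iUnion.2 ⟨⟨x, hx⟩, hV2 ⟨x, hx⟩⟩)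
      have hmem' : (⋂ i ∈ t, (A (V i))ᶜ) ∈ 𝒰 := by
        refine (Filter.biInter_finset_mem t).2 fun i _ => ?_
        exact (Ultrafilter.compl_mem_iff_notMem).2 (hV3 i)
      refine Filter.mem_of_superset hmem' ?_
      intro F hF
      simp only [mem_iInter, mem_compl_iff, hA, mem_setOf_eq,
        Set.not_nonempty_iff_eq_empty] at hF
      show F.1 ∩ C = ∅
      rw [Set.eq_empty_iff_forall_notMem]
      rintro a ⟨haF, haC⟩
      obtain ⟨i, hit, hai⟩ := mem_iUnion₂.1 (ht haC)
      have : a ∈ F.1 ∩ V i := ⟨haF, hai⟩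
      rw [hF i hit] at this
      exact this
    have claim2 : ∀ O ∈ ℱ, A O ∈ 𝒰 := by
      intro O hO
      obtain ⟨x, hxF₀, hxO⟩ := hmem.2 O hO
      exact hxF₀ O (hℱ O hO) hxO
    have hall : ({F : {F : Set X // IsClosed F} | F.1 ∩ C = ∅} ∩ ⋂ O ∈ ℱ, A O) ∈ 𝒰 :=
      Filter.inter_mem claim1 ((Filter.biInter_finset_mem ℱ).2 claim2)
    refine Filter.mem_of_superset hall ?_
    rintro F ⟨h1, h2⟩
    simp only [mem_iInter, hA, mem_setOf_eq] at h2
    exact ⟨h1, h2⟩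
  · refine ⟨fun F G hne => ?_⟩
    have hsub : ¬ F.1 ⊆ G.1 ∨ ¬ G.1 ⊆ F.1 := by
      by_contra h
      push_neg at h
      exact hne (Subtype.ext (le_antisymm h.1 h.2))
    rcases hsub with h | h
    · obtain ⟨x, hxF, hxG⟩ := Set.not_subset.1 h
      exact fell_sep F G x hxF hxG
    · obtain ⟨x, hxG, hxF⟩ := Set.not_subset.1 h
      obtain ⟨u, v, hu, hv, hGu, hFv, hd⟩ := fell_sep G F x hxG hxF
      exact ⟨v, u, hv, hu, hFv, hGu, hd.symm⟩
end
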